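/- Let w be a word of length n ≥ 2 such that each letter appears at most k times in w, and suppose there are exactly s indices i with w_i = w_{n-i+1}. Then f(w) ≤ max{n + 2k − s, n} + 2. -/

import Mathlib

/-!
Let `P` be the set of positions `i` with `w i = w i.rev`, so `|P| = s`. Each line containing `w`
reads `w` or its reverse, so every letter occurs at most `k` times along it. If some row `i`
contains `w`, then every column containing `w` meets that row in the letter `w i` or `w i.rev`,
so at most `2k` columns contain `w`, and at most `k` of them when `i ∈ P`. Hence, when rows and
columns containing `w` both exist: if both kinds meet `P`, there are at most `k + k` of them;
if the rows avoid `P`, there are at most `n - s` rows and `2k` columns; and symmetrically.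
-/

namespace WordGrid

variable {α : Type*}

/-- The `i`-th row of the grid `G` contains the word `w` (forwards or backwards). -/
def rowC {n : ℕ} (w : Fin n → α) (G : Fin n → Fin n → α) (i : Fin n) : Prop :=
  (∀ j, G i j = w j) ∨ (∀ j, G i j = w j.rev)

/-- The `i`-th column of the grid `G` contains the word `w` (forwards or backwards). -/
def colC {n : ℕ} (w : Fin n → α) (G : Fin n → Fin n → α) (i : Fin n) : Prop :=
  (∀ j, G j i = w j) ∨ (∀ j, G j i = w j.rev)

/-- The main diagonal of the grid `G` contains the word `w`. -/
def diagC {n : ℕ} (w : Fin n → α) (G : Fin n → Fin n → α) : Prop :=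
  (∀ j, G j j = w j) ∨ (∀ j, G j j = w j.rev)

/-- The anti-diagonal of the grid `G` contains the word `w`. -/
def adiagC {n : ℕ} (w : Fin n → α) (G : Fin n → Fin n → α) : Prop :=
  (∀ j, G j j.rev = w j) ∨ (∀ j, G j j.rev = w j.rev)

open Classical in
/-- `f(w,G)`: the number of rows, columns and diagonals of `G` containing `w`. -/
noncomputable def count {n : ℕ} (w : Fin n → α) (G : Fin n → Fin n → α) : ℕ :=
  {i | rowC w G i}.ncard + {i | colC w G i}.ncard
    + (if diagC w G then 1 else 0) + (if adiagC w G then 1 else 0)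

/-- `f(w)`: the maximum of `f(w,G)` over all `n`-grids `G`. -/
noncomputable def fword {n : ℕ} (w : Fin n → α) : ℕ :=
  sSup {m | ∃ G : Fin n → Fin n → α, count w G = m}

section

variable {n k : ℕ} {w : Fin n → α} {G : Fin n → Fin n → α}

lemma ncard_fin_le (A : Set (Fin n)) : A.ncard ≤ n := by
  simpa using A.ncard_le_card

lemma ncard_add_ncard_le_of_disjoint {A B : Set (Fin n)} (hAB : Disjoint A B) :
    A.ncard + B.ncard ≤ n :=
  (Set.ncard_union_eq hAB).symm.trans_le (ncard_fin_le _)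

lemma ncard_fiber_comp_rev (w : Fin n → α) (a : α) :
    {i : Fin n | w i.rev = a}.ncard = {i | w i = a}.ncard :=
  Set.ncard_preimage_of_injective_subset_range (s := {i | w i = a}) Fin.rev_injective
    (by simp [Fin.rev_surjective.range_eq])

lemma rowC.ncard_fiber_le {i : Fin n} (hi : rowC w G i)
    (h : ∀ a : α, {i | w i = a}.ncard ≤ k) (a : α) : {j | G i j = a}.ncard ≤ k := by
  rcases hi with hi | hi <;> simp only [hi]
  · exact h a
  · exact (ncard_fiber_comp_rev w a).trans_le (h a)

lemma colC.apply_eq_or {i j : Fin n} (hj : colC w G j) : G i j = w i ∨ G i j = w i.rev :=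
  hj.imp (· i) (· i)

lemma ncard_colC_le_of_rowC_of_palindromic {i : Fin n} (hi : rowC w G i)
    (hP : w i = w i.rev) (h : ∀ a : α, {i | w i = a}.ncard ≤ k) :
    {j | colC w G j}.ncard ≤ k := by
  refine (Set.ncard_le_ncard ?_ (Set.toFinite _)).trans (hi.ncard_fiber_le h (w i))
  intro j hj
  rcases hj.apply_eq_or (i := i) with e | e
  · exact e
  · exact e.trans hP.symm

lemma ncard_colC_le_two_mul_of_rowC {i : Fin n} (hi : rowC w G i)
    (h : ∀ a : α, {i | w i = a}.ncard ≤ k) :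
    {j | colC w G j}.ncard ≤ 2 * k := by
  calc {j | colC w G j}.ncard ≤ ({j | G i j = w i} ∪ {j | G i j = w i.rev}).ncard :=
        Set.ncard_le_ncard (fun j hj => hj.apply_eq_or) (Set.toFinite _)
    _ ≤ {j | G i j = w i}.ncard + {j | G i j = w i.rev}.ncard := Set.ncard_union_le _ _
    _ ≤ 2 * k := by linarith [hi.ncard_fiber_le h (w i), hi.ncard_fiber_le h (w i.rev)]

lemma ncard_rowC_add_ncard_colC_add_ncard_palindromic_le
    (h : ∀ a : α, {i | w i = a}.ncard ≤ k)
    (hR : {i | rowC w G i}.Nonempty) (hC : {j | colC w G j}.Nonempty) :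
    {i | rowC w G i}.ncard + {j | colC w G j}.ncard + {i | w i = w i.rev}.ncard
      ≤ n + 2 * k := by
  obtain ⟨i, hi⟩ := hR
  obtain ⟨j, hj⟩ := hC
  -- Transposing `G` exchanges rows and columns (definitionally), giving the symmetric cases.
  by_cases hRP : ∃ i, rowC w G i ∧ w i = w i.rev
  · by_cases hCP : ∃ j, colC w G j ∧ w j = w j.rev
    · obtain ⟨i', hi', hPi⟩ := hRP
      obtain ⟨j', hj', hPj⟩ := hCP
      have hP := ncard_fin_le {i | w i = w i.rev}
      have hCk := ncard_colC_le_of_rowC_of_palindromic hi' hPi h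
      have hRk : {i | rowC w G i}.ncard ≤ k :=
        ncard_colC_le_of_rowC_of_palindromic (G := fun a b => G b a) hj' hPj h
      omega
    · have hCP : {j | colC w G j}.ncard + {i | w i = w i.rev}.ncard ≤ n :=
        ncard_add_ncard_le_of_disjoint (Set.disjoint_left.mpr fun j hj hPj => hCP ⟨j, hj, hPj⟩)
      have hR2k : {i | rowC w G i}.ncard ≤ 2 * k :=
        ncard_colC_le_two_mul_of_rowC (G := fun a b => G b a) hj h
      omega
  · have hRP : {i | rowC w G i}.ncard + {i | w i = w i.rev}.ncard ≤ n :=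
      ncard_add_ncard_le_of_disjoint (Set.disjoint_left.mpr fun i hi hPi => hRP ⟨i, hi, hPi⟩)
    have hC2k := ncard_colC_le_two_mul_of_rowC hi h
    omega

lemma ncard_rowC_add_ncard_colC_le (h : ∀ a : α, {i | w i = a}.ncard ≤ k) :
    {i | rowC w G i}.ncard + {j | colC w G j}.ncard
      ≤ max (n + 2 * k - {i | w i = w i.rev}.ncard) n := by
  rcases {i | rowC w G i}.eq_empty_or_nonempty with hR | hR
  · simpa [hR] using le_max_of_le_right (ncard_fin_le _)
  rcases {j | colC w G j}.eq_empty_or_nonempty with hC | hC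
  · simpa [hC] using le_max_of_le_right (ncard_fin_le _)
  have := ncard_rowC_add_ncard_colC_add_ncard_palindromic_le h hR hC
  exact le_max_of_le_left (by omega)

lemma count_le (h : ∀ a : α, {i | w i = a}.ncard ≤ k) (G : Fin n → Fin n → α) :
    count w G ≤ max (n + 2 * k - {i | w i = w i.rev}.ncard) n + 2 := by
  have := ncard_rowC_add_ncard_colC_le (G := G) h
  unfold count
  split_ifs <;> omega

end

theorem fword_upper_sym_general {n k : ℕ} (w : Fin n → α)
    (h : ∀ a : α, {i | w i = a}.ncard ≤ k)
    (s : ℕ) (hs : {i | w i = w i.rev}.ncard = s) :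
    fword w ≤ max (n + 2 * k - s) n + 2 := by
  subst hs
  refine csSup_le ⟨_, fun _ => w, rfl⟩ ?_
  rintro m ⟨G, rfl⟩
  exact count_le h G

theorem fword_upper_sym {n k : ℕ} (hn : 2 ≤ n) (w : Fin n → α)
    (h : ∀ a : α, {i | w i = a}.ncard ≤ k)
    (s : ℕ) (hs : {i | w i = w i.rev}.ncard = s) :
    fword w ≤ max (n + 2 * k - s) n + 2 :=
  fword_upper_sym_general w h s hs

end WordGrid
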